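/- arXiv:2302.05529 — 2 statements merged into one kernel-verified Lean document; each statement's English description precedes it below -/
import Mathlib

section
/- For every α ∈ ℂ there is an isomorphism of Ū-modules V_α^∨ ≅ V_{−α}, where V_α^∨ = Hom_ℂ(V_α, ℂ) carries the antipode-twisted dual action (x·f)(v) = f(S(x)v). -/
noncomputable section

open scoped TensorProduct

namespace Unrolled

/-- `q^z = exp(π √-1 z / r)`. -/
def qc (r : ℕ) (z : ℂ) : ℂ := Complex.exp (Real.pi * Complex.I * z / r)

/-- `{z} = q^z - q^{-z}`. -/
def qbrk (r : ℕ) (z : ℂ) : ℂ := qc r z - qc r (-z)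

/-- `[z] = {z}/{1}`. -/
def qint (r : ℕ) (z : ℂ) : ℂ := qbrk r z / qbrk r 1

/-- `{n}! = ∏_{i=1}^n {i}`. -/
def qbrkFact (r n : ℕ) : ℂ := ∏ i ∈ Finset.range n, qbrk r ((i : ℂ) + 1)

/-- `[n]! = ∏_{i=1}^n [i]`. -/
def qintFact (r n : ℕ) : ℂ := ∏ i ∈ Finset.range n, qint r ((i : ℂ) + 1)

/-- The data of five operators `K, K⁻¹, H, E, F` on a complex vector space. -/
structure Ops (V : Type) [AddCommGroup V] [Module ℂ V] where
  K : Module.End ℂ V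
  Kinv : Module.End ℂ V
  H : Module.End ℂ V
  E : Module.End ℂ V
  F : Module.End ℂ V

/-- A module over the restricted unrolled quantum group `Ū = Ū_q^H(sl₂(ℂ))`:
five operators satisfying the defining relations of `Ū`. -/
structure Rep (r : ℕ) (V : Type) [AddCommGroup V] [Module ℂ V] extends Ops V where
  rel_KKinv : K * Kinv = 1
  rel_KinvK : Kinv * K = 1
  rel_HK : H * K = K * H
  rel_HE : H * E - E * H = (2 : ℂ) • E
  rel_HF : H * F - F * H = (-2 : ℂ) • F
  rel_KE : K * E = qc r 2 • (E * K)
  rel_KF : K * F = qc r (-2) • (F * K)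
  rel_EF : E * F - F * E = (qbrk r 1)⁻¹ • (K - Kinv)
  rel_Er : E ^ r = 0
  rel_Fr : F ^ r = 0

variable {V W U : Type} [AddCommGroup V] [Module ℂ V] [AddCommGroup W] [Module ℂ W]
  [AddCommGroup U] [Module ℂ U]

/-- A `Ū`-submodule: a subspace invariant under the five operators. -/
def Ops.Invariant (A : Ops V) (p : Submodule ℂ V) : Prop :=
  (∀ v ∈ p, A.K v ∈ p) ∧ (∀ v ∈ p, A.Kinv v ∈ p) ∧ (∀ v ∈ p, A.H v ∈ p) ∧
    (∀ v ∈ p, A.E v ∈ p) ∧ (∀ v ∈ p, A.F v ∈ p)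

/-- A simple `Ū`-module: nonzero, with no nonzero proper invariant subspace. -/
def Ops.IsSimple (A : Ops V) : Prop :=
  (∃ v : V, v ≠ 0) ∧ ∀ p : Submodule ℂ V, A.Invariant p → p = ⊥ ∨ p = ⊤

/-- A weight module: finite dimensional, a direct sum of `H`-eigenspaces, on which `K`
acts by `q^μ` on the `H`-eigenspace of eigenvalue `μ`. -/
structure IsWeight (r : ℕ) {V : Type} [AddCommGroup V] [Module ℂ V] (A : Ops V) : Prop where
  finDim : FiniteDimensional ℂ V
  sup_eigenspaces : (⨆ μ : ℂ, Module.End.eigenspace A.H μ) = ⊤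
  K_apply : ∀ (μ : ℂ), ∀ v ∈ Module.End.eigenspace A.H μ, A.K v = qc r μ • v

/-- A `Ū`-linear map. -/
def IsEquivariant (A : Ops V) (B : Ops W) (f : V →ₗ[ℂ] W) : Prop :=
  (∀ v, f (A.K v) = B.K (f v)) ∧ (∀ v, f (A.Kinv v) = B.Kinv (f v)) ∧
    (∀ v, f (A.H v) = B.H (f v)) ∧ (∀ v, f (A.E v) = B.E (f v)) ∧
    (∀ v, f (A.F v) = B.F (f v))

/-- Isomorphism of `Ū`-modules. -/
def OpsIso (A : Ops V) (B : Ops W) : Prop :=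
  ∃ e : V ≃ₗ[ℂ] W, IsEquivariant A B (e : V →ₗ[ℂ] W)

/-- The weight `α + r - 1 - 2i` of the basis vector `v_i` of the Verma module `V_α`. -/
def wt (r : ℕ) (α : ℂ) (i : ℕ) : ℂ := α + r - 1 - 2 * i

/-- The coefficient `{i}{i-α}/{1}²` occurring in `E v_i`. -/
def cE (r : ℕ) (α : ℂ) (i : ℕ) : ℂ := qbrk r i * qbrk r ((i : ℂ) - α) / qbrk r 1 ^ 2

/-- The Verma module `V_α` of highest weight `α + r - 1`, realized on `Fin r → ℂ`
with basis `v_0, …, v_{r-1}`. -/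
def vermaOps (r : ℕ) (α : ℂ) : Ops (Fin r → ℂ) where
  K := (Matrix.diagonal fun i : Fin r => qc r (wt r α (i : ℕ))).mulVecLin
  Kinv := (Matrix.diagonal fun i : Fin r => qc r (-wt r α (i : ℕ))).mulVecLin
  H := (Matrix.diagonal fun i : Fin r => wt r α (i : ℕ)).mulVecLin
  E := (Matrix.of fun i j : Fin r =>
    if (j : ℕ) = (i : ℕ) + 1 then cE r α (j : ℕ) else 0).mulVecLin
  F := (Matrix.of fun i j : Fin r =>
    if (i : ℕ) = (j : ℕ) + 1 then (1 : ℂ) else 0).mulVecLin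

/-- `α_{l,n} = (l-1)r + n + 1`, so that `S_n^{lr}` is a quotient of `V_{α_{l,n}}`. -/
def aln (r : ℕ) (l : ℤ) (n : ℕ) : ℂ := ((l : ℂ) - 1) * r + n + 1

/-- The simple module `S_n^{lr}` of highest weight `lr + n` and dimension `n+1`,
realized on `Fin (n+1) → ℂ`. -/
def smodOps (r : ℕ) (l : ℤ) (n : ℕ) : Ops (Fin (n + 1) → ℂ) where
  K := (Matrix.diagonal fun i : Fin (n + 1) => qc r (wt r (aln r l n) (i : ℕ))).mulVecLin
  Kinv := (Matrix.diagonal fun i : Fin (n + 1) => qc r (-wt r (aln r l n) (i : ℕ))).mulVecLin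
  H := (Matrix.diagonal fun i : Fin (n + 1) => wt r (aln r l n) (i : ℕ)).mulVecLin
  E := (Matrix.of fun i j : Fin (n + 1) =>
    if (j : ℕ) = (i : ℕ) + 1 then cE r (aln r l n) (j : ℕ) else 0).mulVecLin
  F := (Matrix.of fun i j : Fin (n + 1) =>
    if (i : ℕ) = (j : ℕ) + 1 then (1 : ℂ) else 0).mulVecLin

/-- `α ∈ (ℂ∖ℤ) ∪ rℤ`. -/
def goodα (r : ℕ) (α : ℂ) : Prop := (¬∃ n : ℤ, α = (n : ℂ)) ∨ ∃ m : ℤ, α = (r : ℂ) * m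

/-- The antipode-twisted dual `Ū`-module structure on `V_α^∨ = Hom_ℂ(V_α, ℂ)`,
given by `(x · f)(v) = f (S(x) v)` with `S(K) = K⁻¹`, `S(K⁻¹) = K`, `S(H) = -H`,
`S(E) = -EK⁻¹` and `S(F) = -KF`. -/
def vermaDualOps (r : ℕ) (α : ℂ) : Ops (Module.Dual ℂ (Fin r → ℂ)) where
  K := ((vermaOps r α).Kinv).dualMap
  Kinv := ((vermaOps r α).K).dualMap
  H := (-(vermaOps r α).H).dualMap
  E := (-((vermaOps r α).E * (vermaOps r α).Kinv)).dualMap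
  F := (-((vermaOps r α).K * (vermaOps r α).F)).dualMap

/-!
In the dual basis `v_i^*` of `V_α^∨`, the twisted action of `x` is the transpose of the matrix of
`S(x)`, and `v_i^*` has `H`-weight `-(α + r - 1 - 2i)`, the weight of `v_{r-1-i}` in `V_{-α}`.
So the isomorphism is antidiagonal, `v_i^* ↦ c_i v_{r-1-i}`. Matching the `F`-actions forces
`c_{i+1} = -q^{α+r-3-2i} c_i`; with this choice the `E`-actions match as well, because
`{r - z} = {z}` gives `{i}{i-α} = {r-i}{r-i+α}`.
-/
open Matrix

lemma qc_add (r : ℕ) (y z : ℂ) : qc r (y + z) = qc r y * qc r z := by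
  simp only [qc, ← Complex.exp_add]
  ring_nf

lemma qc_mul_qc_neg (r : ℕ) (z : ℂ) : qc r z * qc r (-z) = 1 := by
  rw [← qc_add, add_neg_cancel, qc, mul_zero, zero_div, Complex.exp_zero]

lemma qbrk_natCast_sub (r : ℕ) (z : ℂ) : qbrk r (r - z) = qbrk r z := by
  rcases eq_or_ne r 0 with rfl | hr
  · simp [qbrk, qc]
  have hqr : qc r r = -1 := by
    rw [qc, mul_div_assoc, div_self (Nat.cast_ne_zero.2 hr), mul_one, Complex.exp_pi_mul_I]
  have hqr' : qc r (-r) = -1 := by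
    linear_combination (-1 : ℂ) * qc_mul_qc_neg r r + qc r (-r) * hqr
  simp only [qbrk, sub_eq_add_neg, neg_add, neg_neg, qc_add, hqr, hqr']
  ring

lemma cE_eq_cE_neg {r i j : ℕ} (α : ℂ) (h : i + j = r) : cE r α i = cE r (-α) j := by
  have hi : (i : ℂ) = r - j := by rw [← h]; push_cast; ring
  rw [cE, cE, hi, qbrk_natCast_sub, show (r : ℂ) - j - α = r - (j - -α) by ring,
    qbrk_natCast_sub]

lemma wt_neg_rev (r : ℕ) (α : ℂ) (i : Fin r) : wt r (-α) (Fin.rev i) = -wt r α i := by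
  rw [wt, wt, Fin.val_rev, Nat.cast_sub (by omega)]
  push_cast
  ring

section Antidiag

variable {R : Type*} [Semiring R] {n : ℕ}

def antidiag (c : Fin n → R) : Matrix (Fin n) (Fin n) R :=
  of fun j i => if i = Fin.rev j then c i else 0

lemma antidiag_mul_apply (c : Fin n → R) (M : Matrix (Fin n) (Fin n) R) (j i : Fin n) :
    (antidiag c * M) j i = c (Fin.rev j) * M (Fin.rev j) i := by
  simp [antidiag, mul_apply, ite_mul]

lemma mul_antidiag_apply (c : Fin n → R) (M : Matrix (Fin n) (Fin n) R) (j i : Fin n) :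
    (M * antidiag c) j i = M j (Fin.rev i) * c i := by
  simp [antidiag, mul_apply, mul_ite, ← Fin.rev_eq_iff]

lemma antidiag_mul_antidiag (c d : Fin n → R) :
    antidiag c * antidiag d = diagonal fun j => c (Fin.rev j) * d j := by
  ext j i
  rw [antidiag_mul_apply, antidiag, of_apply, diagonal_apply, Fin.rev_rev]
  split_ifs <;> simp_all

lemma antidiag_mul_transpose_eq_mul_antidiag {c : Fin n → R} {M N : Matrix (Fin n) (Fin n) R}
    (h : ∀ i k, c k * M i k = N (Fin.rev k) (Fin.rev i) * c i) :
    antidiag c * Mᵀ = N * antidiag c := by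
  ext j i
  simpa [antidiag_mul_apply, mul_antidiag_apply] using h i (Fin.rev j)

end Antidiag

lemma antidiag_mul_antidiag_inv {K : Type*} [DivisionRing K] {n : ℕ} {c : Fin n → K}
    (hc : ∀ i, c i ≠ 0) :
    antidiag c * antidiag (fun j => (c (Fin.rev j))⁻¹) = 1 := by
  rw [antidiag_mul_antidiag, ← diagonal_one]
  exact congrArg diagonal (funext fun j => mul_inv_cancel₀ (hc _))

section DualCoordinates

variable {R : Type*} [CommRing R] {ι : Type*} [Fintype ι] [DecidableEq ι]

lemma dualBasis_equivFun_dualMap_mulVecLin (M : Matrix ι ι R) (f : Module.Dual R (ι → R)) :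
    (Pi.basisFun R ι).dualBasis.equivFun (M.mulVecLin.dualMap f)
      = Mᵀ *ᵥ (Pi.basisFun R ι).dualBasis.equivFun f := by
  ext k
  simp only [Module.Basis.dualBasis_equivFun, LinearMap.dualMap_apply, Pi.basisFun_apply,
    mulVecLin_apply, mulVec_single_one]
  conv_lhs => rw [← (Pi.basisFun R ι).sum_repr (M.col k)]
  simp [mulVec, dotProduct]

lemma mulVec_dualBasis_equivFun_dualMap {P M N : Matrix ι ι R} (h : P * Mᵀ = N * P)
    (f : Module.Dual R (ι → R)) :
    P *ᵥ (Pi.basisFun R ι).dualBasis.equivFun (M.mulVecLin.dualMap f)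
      = N *ᵥ (P *ᵥ (Pi.basisFun R ι).dualBasis.equivFun f) := by
  rw [dualBasis_equivFun_dualMap_mulVecLin, mulVec_mulVec, h, mulVec_mulVec]

end DualCoordinates

lemma mulVecLin_neg {R : Type*} [CommRing R] {m n : Type*} [Fintype n] (M : Matrix m n R) :
    (-M).mulVecLin = -M.mulVecLin :=
  map_neg _ M

def vermaDualCoeff (r : ℕ) (α : ℂ) (n : ℕ) : ℂ := ∏ k ∈ Finset.range n, -qc r (wt r α (k + 1))

lemma vermaDualCoeff_ne_zero (r : ℕ) (α : ℂ) (n : ℕ) : vermaDualCoeff r α n ≠ 0 :=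
  Finset.prod_ne_zero_iff.2 fun _ _ => neg_ne_zero.2 (Complex.exp_ne_zero _)

lemma vermaDualCoeff_succ (r : ℕ) (α : ℂ) (n : ℕ) :
    vermaDualCoeff r α (n + 1) = vermaDualCoeff r α n * -qc r (wt r α (n + 1)) :=
  Finset.prod_range_succ _ _

section VermaDual

variable (r : ℕ) (α : ℂ)

def vermaDualIso : Module.Dual ℂ (Fin r → ℂ) ≃ₗ[ℂ] (Fin r → ℂ) :=
  (Pi.basisFun ℂ (Fin r)).dualBasis.equivFun.trans <|
    (antidiag fun i : Fin r => vermaDualCoeff r α i).toLinearEquiv' <|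
      invertibleOfRightInverse _ _ <|
        antidiag_mul_antidiag_inv fun i => vermaDualCoeff_ne_zero r α i

variable {r α}

lemma vermaDualIso_dualMap_mulVecLin {M N : Matrix (Fin r) (Fin r) ℂ}
    (h : ∀ i k : Fin r, vermaDualCoeff r α k * M i k
      = N (Fin.rev k) (Fin.rev i) * vermaDualCoeff r α i)
    (f : Module.Dual ℂ (Fin r → ℂ)) :
    vermaDualIso r α (M.mulVecLin.dualMap f) = N.mulVecLin (vermaDualIso r α f) :=
  mulVec_dualBasis_equivFun_dualMap (antidiag_mul_transpose_eq_mul_antidiag h) f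

lemma vermaDualIso_dualMap_diagonal {d e : Fin r → ℂ} (h : ∀ k, e (Fin.rev k) = d k)
    (f : Module.Dual ℂ (Fin r → ℂ)) :
    vermaDualIso r α ((diagonal d).mulVecLin.dualMap f)
      = (diagonal e).mulVecLin (vermaDualIso r α f) :=
  vermaDualIso_dualMap_mulVecLin (fun i k => by
    rcases eq_or_ne i k with rfl | hik
    · rw [diagonal_apply_eq, diagonal_apply_eq, h, mul_comm]
    · simp [hik, hik.symm]) f

variable (r α)

lemma vermaDualIso_K (f : Module.Dual ℂ (Fin r → ℂ)) :
    vermaDualIso r α ((vermaDualOps r α).K f) = (vermaOps r (-α)).K (vermaDualIso r α f) :=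
  vermaDualIso_dualMap_diagonal (fun k => by rw [wt_neg_rev]) f

lemma vermaDualIso_Kinv (f : Module.Dual ℂ (Fin r → ℂ)) :
    vermaDualIso r α ((vermaDualOps r α).Kinv f) = (vermaOps r (-α)).Kinv (vermaDualIso r α f) :=
  vermaDualIso_dualMap_diagonal (fun k => by rw [wt_neg_rev, neg_neg]) f

lemma vermaDualIso_H (f : Module.Dual ℂ (Fin r → ℂ)) :
    vermaDualIso r α ((vermaDualOps r α).H f) = (vermaOps r (-α)).H (vermaDualIso r α f) := by
  rw [vermaDualOps, vermaOps]
  dsimp only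
  rw [← mulVecLin_neg, diagonal_neg]
  exact vermaDualIso_dualMap_diagonal (fun k => wt_neg_rev r α k) f

lemma vermaDualIso_E (f : Module.Dual ℂ (Fin r → ℂ)) :
    vermaDualIso r α ((vermaDualOps r α).E f) = (vermaOps r (-α)).E (vermaDualIso r α f) := by
  rw [vermaDualOps, vermaOps]
  dsimp only
  rw [Module.End.mul_eq_comp, ← mulVecLin_mul, ← mulVecLin_neg]
  refine vermaDualIso_dualMap_mulVecLin (fun i k => ?_) f
  simp only [Matrix.neg_apply, mul_diagonal, of_apply, Fin.val_rev]
  split_ifs with h₁ h₂ h₂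
  · rw [h₁, vermaDualCoeff_succ, ← cE_eq_cE_neg α (by omega : (i : ℕ) + 1 + (r - (i + 1)) = r)]
    linear_combination vermaDualCoeff r α i * cE r α (i + 1) * qc_mul_qc_neg r (wt r α (i + 1))
  · omega
  · omega
  · simp

lemma vermaDualIso_F (f : Module.Dual ℂ (Fin r → ℂ)) :
    vermaDualIso r α ((vermaDualOps r α).F f) = (vermaOps r (-α)).F (vermaDualIso r α f) := by
  rw [vermaDualOps, vermaOps]
  dsimp only
  rw [Module.End.mul_eq_comp, ← mulVecLin_mul, ← mulVecLin_neg]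
  refine vermaDualIso_dualMap_mulVecLin (fun i k => ?_) f
  simp only [Matrix.neg_apply, diagonal_mul, of_apply, Fin.val_rev]
  split_ifs with h₁ h₂ h₂
  · rw [h₁, vermaDualCoeff_succ]
    ring
  · omega
  · omega
  · simp

end VermaDual

theorem stmt2_general (r : ℕ) (α : ℂ) :
    OpsIso (vermaDualOps r α) (vermaOps r (-α)) :=
  ⟨vermaDualIso r α, vermaDualIso_K r α, vermaDualIso_Kinv r α, vermaDualIso_H r α,
    vermaDualIso_E r α, vermaDualIso_F r α⟩

/-- For every `α ∈ ℂ` there is an isomorphism of `Ū`-modules `V_α^∨ ≅ V_{-α}`. -/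
theorem stmt2 (r : ℕ) (hr : 2 ≤ r) (α : ℂ) :
    OpsIso (vermaDualOps r α) (vermaOps r (-α)) :=
  stmt2_general r α

end Unrolled
end
end

section
/- For α ∈ ℂ, the Verma module V_α is a simple Ū-module if and only if α ∉ ℤ∖rℤ. -/
noncomputable section

open scoped TensorProduct

namespace Unrolled

variable {V W U : Type} [AddCommGroup V] [Module ℂ V] [AddCommGroup W] [Module ℂ W]
  [AddCommGroup U] [Module ℂ U]

/-!
In the basis `v_i` we have `E v_i = c_i v_{i-1}` with `c_i = cE r α i` and `F v_i = v_{i+1}`.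
If some `c_i` with `0 < i < r` vanishes, the span of `v_i, …, v_{r-1}` is a proper submodule.
Otherwise, applying `E` to a nonzero vector of a submodule lowers its top coefficient without
killing it, so the submodule contains `v_0`, and then `F` produces every `v_i`.
Finally, for `0 < i < r`, `c_i = 0` iff `i - α ∈ rℤ`, and such an `i` exists iff `α ∈ ℤ ∖ rℤ`.
-/

lemma natCast_ne_intCast_mul {r i : ℕ} (hi : i ≠ 0) (hir : i < r) (n : ℤ) :
    (i : ℂ) ≠ n * r := by
  intro h
  have hdvd : r ∣ i := Int.natCast_dvd_natCast.1 ⟨n, by rw [mul_comm]; exact_mod_cast h⟩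
  exact hi (Nat.eq_zero_of_dvd_of_lt hdvd hir)

lemma qbrk_eq_zero_iff {r : ℕ} (hr : r ≠ 0) (z : ℂ) :
    qbrk r z = 0 ↔ ∃ n : ℤ, z = n * r := by
  have hr' : (r : ℂ) ≠ 0 := Nat.cast_ne_zero.2 hr
  have hπI : (Real.pi : ℂ) * Complex.I ≠ 0 :=
    mul_ne_zero (by exact_mod_cast Real.pi_ne_zero) Complex.I_ne_zero
  rw [qbrk, qc, qc, sub_eq_zero, Complex.exp_eq_exp_iff_exists_int]
  refine exists_congr fun n => ?_
  constructor
  · intro h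
    field_simp at h
    apply mul_left_cancel₀ hπI
    linear_combination (Real.pi * Complex.I / 2) * h
  · rintro rfl
    field_simp
    ring

lemma qbrk_natCast_ne_zero {r i : ℕ} (hi : i ≠ 0) (hir : i < r) : qbrk r i ≠ 0 := by
  rw [Ne, qbrk_eq_zero_iff (by omega), not_exists]
  exact natCast_ne_intCast_mul hi hir

lemma cE_eq_zero_iff {r i : ℕ} (hi : i ≠ 0) (hir : i < r) (α : ℂ) :
    cE r α i = 0 ↔ qbrk r (i - α) = 0 := by
  have h1 : qbrk r 1 ≠ 0 := by exact_mod_cast qbrk_natCast_ne_zero one_ne_zero (by omega)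
  simp [cE, qbrk_natCast_ne_zero hi hir, h1]

section Verma

variable {r : ℕ} {α : ℂ}

lemma vermaOps_E_apply (x : Fin r → ℂ) (k : Fin r) :
    (vermaOps r α).E x k =
      if h : (k : ℕ) + 1 < r then cE r α (k + 1) * x ⟨k + 1, h⟩ else 0 := by
  simp only [vermaOps, Matrix.mulVecLin_apply, Matrix.mulVec, dotProduct, Matrix.of_apply,
    ite_mul, zero_mul]
  split_ifs with h
  · rw [Finset.sum_eq_single_of_mem ⟨k + 1, h⟩ (Finset.mem_univ _)
      fun j _ hj => if_neg fun h' => hj (Fin.ext h'), if_pos rfl]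
  · exact Finset.sum_eq_zero fun j _ => if_neg fun (h' : (j : ℕ) = k + 1) => h (h' ▸ j.isLt)

lemma vermaOps_F_apply (x : Fin r → ℂ) (k : Fin r) :
    (vermaOps r α).F x k = if h : (k : ℕ) = 0 then 0 else x ⟨k - 1, by omega⟩ := by
  simp only [vermaOps, Matrix.mulVecLin_apply, Matrix.mulVec, dotProduct, Matrix.of_apply,
    ite_mul, zero_mul, one_mul]
  split_ifs with h
  · exact Finset.sum_eq_zero fun j _ => if_neg (by omega)
  · rw [Finset.sum_eq_single_of_mem ⟨k - 1, by omega⟩ (Finset.mem_univ _)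
      fun j _ hj => if_neg fun h' => hj (Fin.ext (by simp only; omega)),
      if_pos (by simp only; omega)]

lemma vermaOps_F_single {m : ℕ} (hm : m + 1 < r) :
    (vermaOps r α).F (Pi.single ⟨m, by omega⟩ 1) = Pi.single ⟨m + 1, hm⟩ 1 := by
  ext k
  rw [vermaOps_F_apply]
  split_ifs with h
  · rw [Pi.single_eq_of_ne (by intro e; simp [e] at h)]
  · simp only [Pi.single_apply, Fin.ext_iff]
    congr 1
    exact propext (by omega)

lemma not_isSimple_of_cE_eq_zero {i : ℕ} (hi : i ≠ 0) (hir : i < r) (h : cE r α i = 0) :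
    ¬(vermaOps r α).IsSimple := by
  rintro ⟨-, hsimple⟩
  let p : Submodule ℂ (Fin r → ℂ) := Submodule.pi {k | (k : ℕ) < i} fun _ => ⊥
  have mem_p (x : Fin r → ℂ) : x ∈ p ↔ ∀ k : Fin r, (k : ℕ) < i → x k = 0 := by
    simp [p, Submodule.mem_pi]
  have diagonal_mem (d : Fin r → ℂ) (x) (hx : x ∈ p) : (Matrix.diagonal d).mulVecLin x ∈ p := by
    rw [mem_p] at hx ⊢
    intro k hk
    simp [Matrix.mulVec_diagonal, hx k hk]
  have hp : (vermaOps r α).Invariant p := by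
    refine ⟨diagonal_mem _, diagonal_mem _, diagonal_mem _, fun x hx => ?_, fun x hx => ?_⟩ <;>
      rw [mem_p] at hx ⊢ <;> intro k hk
    · rw [vermaOps_E_apply]
      split_ifs with hk'
      · rcases (by omega : (k : ℕ) + 1 < i ∨ (k : ℕ) + 1 = i) with hlt | heq
        · rw [hx _ hlt, mul_zero]
        · rw [show cE r α (k + 1) = 0 from heq ▸ h, zero_mul]
      · rfl
    · rw [vermaOps_F_apply]
      split_ifs
      · rfl
      · exact hx _ (by simp only; omega)
  rcases hsimple p hp with hbot | htop
  · have : Pi.single ⟨i, hir⟩ (1 : ℂ) ∈ p :=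
      (mem_p _).2 fun k hk => Pi.single_eq_of_ne (by rintro rfl; simp at hk) _
    simp [hbot] at this
  · have : Pi.single ⟨0, by omega⟩ (1 : ℂ) ∈ p := htop ▸ Submodule.mem_top
    simpa using (mem_p _).1 this ⟨0, by omega⟩ (Nat.pos_of_ne_zero hi)

lemma single_zero_mem_of_invariant (hr : 0 < r) (hc : ∀ i, i ≠ 0 → i < r → cE r α i ≠ 0)
    {p : Submodule ℂ (Fin r → ℂ)} (hp : (vermaOps r α).Invariant p) (j : ℕ) :
    ∀ x ∈ p, x ≠ 0 → (∀ k : Fin r, j < k → x k = 0) → Pi.single ⟨0, hr⟩ 1 ∈ p := by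
  induction j with
  | zero =>
    intro x hxp hx0 hsupp
    have hx : x = x ⟨0, hr⟩ • Pi.single ⟨0, hr⟩ 1 := by
      ext k
      by_cases hk : (k : ℕ) = 0
      · simp [show k = ⟨0, hr⟩ from Fin.ext hk]
      · simp [hsupp k (by omega), Fin.ext_iff, hk]
    have hx00 : x ⟨0, hr⟩ ≠ 0 := fun h => hx0 (by rw [hx, h, zero_smul])
    rw [hx] at hxp
    simpa [hx00] using p.smul_mem (x ⟨0, hr⟩)⁻¹ hxp
  | succ j ih =>
    intro x hxp hx0 hsupp
    by_cases hsupp' : ∀ k : Fin r, j < k → x k = 0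
    · exact ih x hxp hx0 hsupp'
    push Not at hsupp'
    obtain ⟨k, hjk, hxk⟩ := hsupp'
    have hk : (k : ℕ) = j + 1 := by
      by_contra hne
      exact hxk (hsupp k (by omega))
    have hjr : j + 1 < r := hk ▸ k.isLt
    refine ih _ (hp.2.2.2.1 x hxp) (fun hE => ?_) fun l hl => ?_
    · have := congrFun hE ⟨j, by omega⟩
      simp only [vermaOps_E_apply, dif_pos hjr, Pi.zero_apply, mul_eq_zero] at this
      rw [show (⟨j + 1, hjr⟩ : Fin r) = k from Fin.ext hk.symm] at this
      exact this.elim (hc _ (by omega) hjr) hxk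
    · rw [vermaOps_E_apply]
      split_ifs
      · rw [hsupp _ (by simp only; omega), mul_zero]
      · rfl

lemma isSimple_of_cE_ne_zero (hr : 0 < r) (hc : ∀ i, i ≠ 0 → i < r → cE r α i ≠ 0) :
    (vermaOps r α).IsSimple := by
  refine ⟨⟨Pi.single ⟨0, hr⟩ 1, by simp⟩, fun p hp => or_iff_not_imp_left.2 fun hbot => ?_⟩
  obtain ⟨x, hxp, hx0⟩ := Submodule.exists_mem_ne_zero_of_ne_bot hbot
  have h0 := single_zero_mem_of_invariant hr hc hp (r - 1) x hxp hx0 fun k hk => by omega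
  have hsingle (m : ℕ) (hm : m < r) : Pi.single ⟨m, hm⟩ 1 ∈ p := by
    induction m with
    | zero => exact h0
    | succ m ih => exact vermaOps_F_single hm ▸ hp.2.2.2.2 _ (ih (by omega))
  rw [eq_top_iff, ← (Pi.basisFun ℂ (Fin r)).span_eq, Submodule.span_le]
  rintro _ ⟨k, rfl⟩
  simpa using hsingle k k.isLt

lemma vermaOps_isSimple_iff (hr : 0 < r) :
    (vermaOps r α).IsSimple ↔ ∀ i, i ≠ 0 → i < r → cE r α i ≠ 0 :=
  ⟨fun hs _ hi hir h => not_isSimple_of_cE_eq_zero hi hir h hs, isSimple_of_cE_ne_zero hr⟩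

end Verma

lemma exists_qbrk_sub_eq_zero_iff {r : ℕ} (hr : r ≠ 0) (α : ℂ) :
    (∃ i : ℕ, i ≠ 0 ∧ i < r ∧ qbrk r (i - α) = 0) ↔
      (∃ n : ℤ, α = n) ∧ ¬∃ m : ℤ, α = r * m := by
  simp only [qbrk_eq_zero_iff hr]
  constructor
  · rintro ⟨i, hi, hir, k, hk⟩
    refine ⟨⟨i - k * r, by push_cast; linear_combination -hk⟩, fun ⟨m, hm⟩ => ?_⟩
    exact natCast_ne_intCast_mul hi hir (k + m) (by push_cast; linear_combination hk + hm)
  · rintro ⟨⟨n, rfl⟩, hn⟩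
    have hr' : (r : ℤ) ≠ 0 := by exact_mod_cast hr
    obtain ⟨i, hi⟩ := Int.eq_ofNat_of_zero_le (Int.emod_nonneg n hr')
    have hir : n % r < r := Int.emod_lt_of_pos n (by omega)
    have hdiv := Int.emod_def n r
    refine ⟨i, fun hi0 => hn ⟨n / r, ?_⟩, by omega, -(n / r), ?_⟩
    · exact_mod_cast (by subst hi0; omega : n = r * (n / r))
    · exact_mod_cast (by linear_combination hdiv - hi : (i : ℤ) - n = -(n / r) * r)

/-- The Verma module `V_α` is simple if and only if `α ∉ ℤ ∖ rℤ`. -/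
theorem stmt3 (r : ℕ) (hr : 2 ≤ r) (α : ℂ) :
    (vermaOps r α).IsSimple ↔
      ¬((∃ n : ℤ, α = (n : ℂ)) ∧ ¬∃ m : ℤ, α = (r : ℂ) * m) := by
  rw [vermaOps_isSimple_iff (by omega), ← exists_qbrk_sub_eq_zero_iff (by omega)]
  simp only [not_exists, not_and]
  exact forall₃_congr fun i hi hir => not_congr (cE_eq_zero_iff hi hir α)

end Unrolled
end
end
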